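/- Let ⊕ be a sum of open sets in ℝ^d satisfying the six requirements in the essential sense. Then for all bounded open sets A, B ⊆ ℝ^d, bulk(A ⊕ B) = bulk(bulk(A) ⊕ B) = bulk(bulk(A) ⊕ bulk(B)). -/
import Mathlib


open MeasureTheory Metric Bornology

/-- Points of `ℝ^d`. -/
abbrev Pt (d : ℕ) := EuclideanSpace ℝ (Fin d)

/-- A cubic isometry: a linear isometry of ℝ^d mapping the cube [−1,1]^d to itself. -/
def CubicIsometry {d : ℕ} (U : Pt d ≃ₗᵢ[ℝ] Pt d) : Prop :=
  ⇑U '' {y : Pt d | ∀ i, |y i| ≤ 1} = {y : Pt d | ∀ i, |y i| ≤ 1}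

/-- A bounded open set. -/
def GoodSet {d : ℕ} (A : Set (Pt d)) : Prop := IsOpen A ∧ Bornology.IsBounded A

/-- `A` is essentially contained in `B`: λ(A \ B) = 0. -/
def EssSubset {d : ℕ} (A B : Set (Pt d)) : Prop := volume (A \ B) = 0

/-- `A` and `B` are essentially equal: λ(A Δ B) = 0. -/
def EssEq {d : ℕ} (A B : Set (Pt d)) : Prop := volume (symmDiff A B) = 0

/-- A sum of open sets satisfying the six requirements in the essential sense: it sends
bounded open sets to open sets and is essentially monotone, essentially commutative,
essentially associative (when the intermediate sums are bounded), essentially translation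
invariant, essentially invariant under cubic isometries, and conserves Lebesgue measure. -/
structure EssSumAxioms (d : ℕ) (Φ : Set (Pt d) → Set (Pt d) → Set (Pt d)) : Prop where
  isOpen : ∀ A B, GoodSet A → GoodSet B → IsOpen (Φ A B)
  subset_sum : ∀ A B, GoodSet A → GoodSet B → EssSubset A (Φ A B)
  mono : ∀ A B C, GoodSet A → GoodSet B → GoodSet C → A ⊆ B → EssSubset (Φ A C) (Φ B C)
  comm : ∀ A B, GoodSet A → GoodSet B → EssEq (Φ A B) (Φ B A)
  assoc : ∀ A B C, GoodSet A → GoodSet B → GoodSet C →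
      Bornology.IsBounded (Φ A B) → Bornology.IsBounded (Φ B C) →
      EssEq (Φ (Φ A B) C) (Φ A (Φ B C))
  translate : ∀ (A B : Set (Pt d)) (x : Pt d), GoodSet A → GoodSet B →
      EssEq (Φ ((· + x) '' A) ((· + x) '' B)) ((· + x) '' (Φ A B))
  rotate : ∀ (A B : Set (Pt d)) (U : Pt d ≃ₗᵢ[ℝ] Pt d), CubicIsometry U →
      GoodSet A → GoodSet B → EssEq (Φ (⇑U '' A) (⇑U '' B)) (⇑U '' (Φ A B))
  conserve : ∀ A B, GoodSet A → GoodSet B → volume (Φ A B) = volume A + volume B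

/-- An open set is *bulky* if it contains every open set essentially equal to it
(i.e. whose symmetric difference with it has Lebesgue measure zero). -/
def Bulky {d : ℕ} (U : Set (Pt d)) : Prop :=
  IsOpen U ∧ ∀ V : Set (Pt d), IsOpen V → volume (symmDiff V U) = 0 → V ⊆ U

/-- `bulk A` is the bulky open set essentially equal to an open set `A`: the union of all
open sets essentially contained in `A`. -/
def bulk {d : ℕ} (A : Set (Pt d)) : Set (Pt d) :=
  ⋃₀ {B : Set (Pt d) | IsOpen B ∧ volume (B \ A) = 0}

lemma left_diff_null_of_essEq {d : ℕ} {X Y : Set (Pt d)} (h : EssEq X Y) :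
    volume (X \ Y) = 0 :=
  measure_mono_null (by rw [Set.symmDiff_def]; exact Set.subset_union_left) h

lemma right_diff_null_of_essEq {d : ℕ} {X Y : Set (Pt d)} (h : EssEq X Y) :
    volume (Y \ X) = 0 :=
  measure_mono_null (by rw [Set.symmDiff_def]; exact Set.subset_union_right) h

lemma essEq_of_diffs {d : ℕ} {X Y : Set (Pt d)}
    (h1 : volume (X \ Y) = 0) (h2 : volume (Y \ X) = 0) : EssEq X Y := by
  rw [EssEq, Set.symmDiff_def]
  exact measure_union_null h1 h2

lemma rev_diff_null {d : ℕ} {X Y : Set (Pt d)} (hX : MeasurableSet X)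
    (h : volume (X \ Y) = 0) (hv : volume X = volume Y) (hfin : volume X ≠ ⊤) :
    volume (Y \ X) = 0 := by
  have hXY : volume (Y ∩ X) = volume X := by
    refine le_antisymm (measure_mono Set.inter_subset_right) ?_
    calc volume X = volume ((X ∩ Y) ∪ (X \ Y)) := by rw [Set.inter_union_diff]
      _ ≤ volume (X ∩ Y) + volume (X \ Y) := measure_union_le _ _
      _ = volume (Y ∩ X) := by rw [h, add_zero, Set.inter_comm]
  have hsum : volume (Y ∩ X) + volume (Y \ X) = volume Y :=
    measure_inter_add_diff Y hX
  rw [hXY, ← hv] at hsum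
  exact (ENNReal.add_right_inj hfin).1 (by rw [add_zero]; exact hsum)

lemma subset_bulk {d : ℕ} {A : Set (Pt d)} (hA : IsOpen A) : A ⊆ bulk A :=
  Set.subset_sUnion_of_mem ⟨hA, by simp⟩

lemma bulk_isOpen {d : ℕ} (A : Set (Pt d)) : IsOpen (bulk A) :=
  isOpen_sUnion fun _ hB => hB.1

lemma bulk_subset_closure {d : ℕ} (A : Set (Pt d)) : bulk A ⊆ closure A := by
  rintro x ⟨B, ⟨hBo, hBn⟩, hxB⟩
  by_contra hx
  have hopen : IsOpen (B ∩ (closure A)ᶜ) := hBo.inter isClosed_closure.isOpen_compl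
  have hne : (B ∩ (closure A)ᶜ).Nonempty := ⟨x, hxB, hx⟩
  have hpos : 0 < volume (B ∩ (closure A)ᶜ) := hopen.measure_pos volume hne
  have hnull : volume (B ∩ (closure A)ᶜ) = 0 :=
    measure_mono_null (by
      intro y hy
      exact Set.mem_diff_of_mem hy.1 fun hyA => hy.2 (subset_closure hyA)) hBn
  exact hpos.ne' hnull

lemma bulk_diff_null {d : ℕ} (A : Set (Pt d)) : volume (bulk A \ A) = 0 := by
  obtain ⟨T, hTc, hTS, hT⟩ := TopologicalSpace.isOpen_sUnion_countable
    {B : Set (Pt d) | IsOpen B ∧ volume (B \ A) = 0} (fun s hs => hs.1)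
  have : bulk A \ A = ⋃ B ∈ T, (B \ A) := by
    rw [bulk, ← hT, Set.sUnion_eq_biUnion, Set.iUnion_diff]
    simp only [Set.iUnion_diff]
  rw [this]
  exact (measure_biUnion_null_iff hTc).2 fun B hB => (hTS hB).2

lemma goodSet_bulk {d : ℕ} {A : Set (Pt d)} (hA : GoodSet A) : GoodSet (bulk A) :=
  ⟨bulk_isOpen A, (hA.2.closure).subset (bulk_subset_closure A)⟩

lemma volume_bulk {d : ℕ} {A : Set (Pt d)} (hA : IsOpen A) : volume (bulk A) = volume A := by
  refine le_antisymm ?_ (measure_mono (subset_bulk hA))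
  calc volume (bulk A) = volume ((bulk A ∩ A) ∪ (bulk A \ A)) := by rw [Set.inter_union_diff]
    _ ≤ volume (bulk A ∩ A) + volume (bulk A \ A) := measure_union_le _ _
    _ ≤ volume A := by rw [bulk_diff_null, add_zero]; exact measure_mono Set.inter_subset_right

lemma bulk_congr {d : ℕ} {X Y : Set (Pt d)} (h : EssEq X Y) : bulk X = bulk Y := by
  have key : ∀ (U V : Set (Pt d)), volume (U \ V) = 0 → ∀ B : Set (Pt d),
      volume (B \ U) = 0 → volume (B \ V) = 0 := by
    intro U V hUV B hBU
    refine measure_mono_null (fun x hx => ?_) (measure_union_null hBU hUV)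
    by_cases hxU : x ∈ U
    · exact Set.mem_union_right _ ⟨hxU, hx.2⟩
    · exact Set.mem_union_left _ ⟨hx.1, hxU⟩
  have hset : {B : Set (Pt d) | IsOpen B ∧ volume (B \ X) = 0} =
      {B : Set (Pt d) | IsOpen B ∧ volume (B \ Y) = 0} := by
    ext C
    simp only [Set.mem_setOf_eq]
    exact ⟨fun hC => ⟨hC.1, key X Y (left_diff_null_of_essEq h) C hC.2⟩,
      fun hC => ⟨hC.1, key Y X (right_diff_null_of_essEq h) C hC.2⟩⟩
  rw [bulk, bulk, hset]

/-- Let ⊕ be a sum of open sets in ℝ^d satisfying the six requirements in the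
essential sense. Then for all bounded open sets A, B,
bulk(A ⊕ B) = bulk(bulk(A) ⊕ B) = bulk(bulk(A) ⊕ bulk(B)). -/
theorem bulk_sum_eq_bulk_sum_bulk (d : ℕ)
    (Φ : Set (Pt d) → Set (Pt d) → Set (Pt d)) (hax : EssSumAxioms d Φ)
    (A B : Set (Pt d)) (hA : GoodSet A) (hB : GoodSet B) :
    bulk (Φ A B) = bulk (Φ (bulk A) B) ∧
      bulk (Φ (bulk A) B) = bulk (Φ (bulk A) (bulk B)) := by
  have hA' : GoodSet (bulk A) := goodSet_bulk hA
  have hB' : GoodSet (bulk B) := goodSet_bulk hB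
  have hvA : volume (bulk A) = volume A := volume_bulk hA.1
  have hvB : volume (bulk B) = volume B := volume_bulk hB.1
  have hfin : volume (Φ A B) ≠ ⊤ := by
    rw [hax.conserve A B hA hB]
    exact (ENNReal.add_lt_top.2 ⟨hA.2.measure_lt_top, hB.2.measure_lt_top⟩).ne
  have hv1 : volume (Φ A B) = volume (Φ (bulk A) B) := by
    rw [hax.conserve A B hA hB, hax.conserve (bulk A) B hA' hB, hvA]
  have h1sub : volume (Φ A B \ Φ (bulk A) B) = 0 :=
    hax.mono A (bulk A) B hA hA' hB (subset_bulk hA.1)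
  have h1 : EssEq (Φ A B) (Φ (bulk A) B) := essEq_of_diffs h1sub
    (rev_diff_null (hax.isOpen A B hA hB).measurableSet h1sub hv1 hfin)
  have hc1 : EssEq (Φ (bulk A) B) (Φ B (bulk A)) := hax.comm (bulk A) B hA' hB
  have hc2 : EssEq (Φ (bulk B) (bulk A)) (Φ (bulk A) (bulk B)) := hax.comm (bulk B) (bulk A) hB' hA'
  have hms : volume (Φ B (bulk A) \ Φ (bulk B) (bulk A)) = 0 :=
    hax.mono B (bulk B) (bulk A) hB hB' hA' (subset_bulk hB.1)
  have h2sub : volume (Φ (bulk A) B \ Φ (bulk A) (bulk B)) = 0 := by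
    refine measure_mono_null (fun x hx => ?_)
      (measure_union_null (left_diff_null_of_essEq hc1)
        (measure_union_null hms (left_diff_null_of_essEq hc2)))
    by_cases h1x : x ∈ Φ B (bulk A)
    · by_cases h2x : x ∈ Φ (bulk B) (bulk A)
      · exact Or.inr (Or.inr ⟨h2x, hx.2⟩)
      · exact Or.inr (Or.inl ⟨h1x, h2x⟩)
    · exact Or.inl ⟨hx.1, h1x⟩
  have hfin2 : volume (Φ (bulk A) B) ≠ ⊤ := by
    rw [hax.conserve (bulk A) B hA' hB, hvA]
    exact (ENNReal.add_lt_top.2 ⟨hA.2.measure_lt_top, hB.2.measure_lt_top⟩).ne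
  have hv2 : volume (Φ (bulk A) B) = volume (Φ (bulk A) (bulk B)) := by
    rw [hax.conserve (bulk A) B hA' hB, hax.conserve (bulk A) (bulk B) hA' hB', hvB]
  have h2 : EssEq (Φ (bulk A) B) (Φ (bulk A) (bulk B)) := essEq_of_diffs h2sub
    (rev_diff_null (hax.isOpen (bulk A) B hA' hB).measurableSet h2sub hv2 hfin2)
  exact ⟨bulk_congr h1, bulk_congr h2⟩
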